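/- Let X, Y, W be independent exponentials with means γ_AB, γ_AR, γ_RB > 0, let ρ > 0, R ≥ 0, and set V = W/(W + γ_AR + 1/ρ). Then P((1 + ρX + ρYV)/(1 + ρY) < 2^{2R}) = 1 − (γ_AB/((2^{2R} − 1)γ_AR + γ_AB)) e^{−(2^{2R}−1)/(ρ γ_AB)} [μ₁(β₂ − 1) e^{μ₁ β₂} Ei(−μ₁ β₂) + 1], where μ₁ = (γ_AR + 1/ρ)/γ_RB and β₂ = (2^{2R} γ_AR + γ_AB)/((2^{2R} − 1) γ_AR + γ_AB). -/

import Mathlib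

/-!
Since `Y ≥ 0`, clearing the denominator turns the outage event into
`X < (T - 1) / ρ + Y (T - V)` with `T = 2^{2R}`. Conditioning on `(W, Y)`, the exponential tail
of `X` makes the complementary probability `e^{-(T-1)/(ρ γAB)} E[exp (-Y (T - V) / γAB)]`;
conditioning then on `W`, the Laplace transform of `Y` turns this into
`E[γAB / (γAB + γAR (T - V))]`. As a function of `W` this is the Möbius function
`γAB / b * (W + c) / (W + c β₂)` with `c = γAR + 1/ρ` and `b = (T - 1) γAR + γAB`, and the
mean of `1 / (W + d)` under an exponential law is an exponential integral after the
substitution `t = (W + d) / γRB`.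
-/

open MeasureTheory ProbabilityTheory Real Set
open scoped ENNReal

noncomputable def Ei (x : ℝ) : ℝ := ∫ t in Set.Iic x, Real.exp t / t

lemma Ei_neg (x : ℝ) : Ei (-x) = -∫ t in Ioi x, exp (-t) / t := by
  rw [Ei, ← integral_comp_neg_Ioi, ← integral_neg]
  simp_rw [div_neg]

lemma setIntegral_exp_neg_mul_div_add {r d : ℝ} (hr : 0 < r) (hd : 0 < d) :
    ∫ x in Ioi 0, exp (-(r * x)) / (x + d) = -(exp (r * d) * Ei (-(r * d))) := by
  have hshift :
      ∫ x in Ioi 0, exp (-(r * (x + d))) / (x + d) = ∫ x in Ioi d, exp (-(r * x)) / x := by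
    have := (measurePreserving_add_right volume d).setIntegral_preimage_emb
      (measurableEmbedding_addRight d) (fun x => exp (-(r * x)) / x) (Ioi d)
    simpa [preimage_add_const_Ioi] using this
  have hscale : ∫ x in Ioi d, exp (-(r * x)) / x = ∫ t in Ioi (r * d), exp (-t) / t := by
    rw [← integral_comp_mul_left_Ioi' _ _ hr, smul_eq_mul, ← integral_const_mul]
    refine setIntegral_congr_fun measurableSet_Ioi fun x hx => ?_
    field_simp [(show (0:ℝ) < x from lt_trans hd hx).ne']
  calc ∫ x in Ioi 0, exp (-(r * x)) / (x + d)
      = exp (r * d) * ∫ x in Ioi 0, exp (-(r * (x + d))) / (x + d) := by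
        rw [← integral_const_mul]
        refine setIntegral_congr_fun measurableSet_Ioi fun x _ => ?_
        rw [← mul_div_assoc, ← exp_add]
        ring_nf
    _ = -(exp (r * d) * Ei (-(r * d))) := by rw [hshift, hscale, Ei_neg]; ring

section Exponential

variable {r : ℝ}

lemma measurable_exponentialPDF (r : ℝ) : Measurable (exponentialPDF r) :=
  (measurable_exponentialPDFReal r).ennreal_ofReal

lemma expMeasure_eq_withDensity (r : ℝ) : expMeasure r = volume.withDensity (exponentialPDF r) :=
  rfl

lemma ae_nonneg_expMeasure : ∀ᵐ x ∂expMeasure r, 0 ≤ x := by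
  rw [expMeasure_eq_withDensity, ae_withDensity_iff (measurable_exponentialPDF r)]
  refine Filter.Eventually.of_forall fun x hx => ?_
  by_contra! hneg
  exact hx (exponentialPDF_of_neg hneg)

lemma expMeasure_Ici (hr : 0 < r) {t : ℝ} (ht : 0 ≤ t) :
    expMeasure r (Ici t) = ENNReal.ofReal (exp (-(r * t))) := by
  have := isProbabilityMeasure_expMeasure hr
  have hIoi : expMeasure r (Ici t) = expMeasure r (Ioi t) := by
    rw [expMeasure_eq_withDensity, withDensity_apply _ measurableSet_Ici,
      withDensity_apply _ measurableSet_Ioi, setLIntegral_congr Ioi_ae_eq_Ici]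
  rw [hIoi, ← compl_Iic, prob_compl_eq_one_sub measurableSet_Iic, ← ofReal_cdf,
    cdf_expMeasure_eq hr, if_pos ht, ← ENNReal.ofReal_one,
    ← ENNReal.ofReal_sub _ (sub_nonneg.2 (exp_le_one_iff.2 (by nlinarith))), sub_sub_cancel]

lemma lintegral_exp_neg_mul_expMeasure (hr : 0 < r) {s : ℝ} (hrs : 0 < r + s) :
    ∫⁻ x, ENNReal.ofReal (exp (-(s * x))) ∂expMeasure r = ENNReal.ofReal (r / (r + s)) := by
  have hpdf : ∀ x, exponentialPDF r x * ENNReal.ofReal (exp (-(s * x)))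
      = ENNReal.ofReal (r / (r + s)) * exponentialPDF (r + s) x := by
    intro x
    rcases le_or_gt 0 x with hx | hx
    · rw [exponentialPDF_of_nonneg hx, exponentialPDF_of_nonneg hx,
        ← ENNReal.ofReal_mul (by positivity), ← ENNReal.ofReal_mul (by positivity)]
      congr 1
      field_simp
      rw [← exp_add]
      ring_nf
    · simp [exponentialPDF_of_neg hx]
  rw [expMeasure_eq_withDensity, lintegral_withDensity_eq_lintegral_mul _
      (measurable_exponentialPDF r) (by fun_prop)]
  simp only [Pi.mul_apply]
  rw [lintegral_congr hpdf, lintegral_const_mul _ (measurable_exponentialPDF _),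
    lintegral_exponentialPDF_eq_one hrs, mul_one]

lemma integral_expMeasure (hr : 0 < r) (f : ℝ → ℝ) :
    ∫ x, f x ∂expMeasure r = ∫ x in Ioi 0, r * exp (-(r * x)) * f x := by
  rw [expMeasure_eq_withDensity, integral_withDensity_eq_integral_toReal_smul
    (measurable_exponentialPDF r) (Filter.Eventually.of_forall fun _ => ENNReal.ofReal_lt_top),
    ← integral_Ici_eq_integral_Ioi, ← integral_indicator measurableSet_Ici]
  congr 1 with x
  rw [exponentialPDF_eq, smul_eq_mul]
  split_ifs with hx
  · rw [indicator_of_mem (mem_Ici.2 hx), ENNReal.toReal_ofReal (by positivity)]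
  · rw [indicator_of_notMem (notMem_Ici.2 (not_le.1 hx))]
    simp

lemma integrable_inv_add_expMeasure (hr : 0 < r) {d : ℝ} (hd : 0 < d) :
    Integrable (fun x => (x + d)⁻¹) (expMeasure r) := by
  have := isProbabilityMeasure_expMeasure hr
  refine Integrable.of_bound (by fun_prop) d⁻¹ ?_
  filter_upwards [ae_nonneg_expMeasure] with x hx
  rw [norm_inv, Real.norm_of_nonneg (by linarith)]
  exact inv_anti₀ hd (by linarith)

lemma integral_inv_add_expMeasure (hr : 0 < r) {d : ℝ} (hd : 0 < d) :
    ∫ x, (x + d)⁻¹ ∂expMeasure r = -(r * exp (r * d) * Ei (-(r * d))) := by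
  simp_rw [integral_expMeasure hr, mul_assoc, ← div_eq_mul_inv, integral_const_mul,
    setIntegral_exp_neg_mul_div_add hr hd]
  ring

lemma add_div_add_ae_eq (c : ℝ) {d : ℝ} (hd : 0 < d) :
    (fun x => (x + c) / (x + d)) =ᵐ[expMeasure r] fun x => 1 + (c - d) * (x + d)⁻¹ := by
  filter_upwards [ae_nonneg_expMeasure] with x hx
  field_simp
  ring

lemma integrable_add_div_add_expMeasure (hr : 0 < r) (c : ℝ) {d : ℝ} (hd : 0 < d) :
    Integrable (fun x => (x + c) / (x + d)) (expMeasure r) := by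
  have := isProbabilityMeasure_expMeasure hr
  exact ((integrable_const 1).add ((integrable_inv_add_expMeasure hr hd).const_mul _)).congr
    (add_div_add_ae_eq c hd).symm

lemma integral_add_div_add_expMeasure (hr : 0 < r) (c : ℝ) {d : ℝ} (hd : 0 < d) :
    ∫ x, (x + c) / (x + d) ∂expMeasure r = 1 + (d - c) * r * exp (r * d) * Ei (-(r * d)) := by
  have := isProbabilityMeasure_expMeasure hr
  rw [integral_congr_ae (add_div_add_ae_eq c hd), integral_add (integrable_const _)
    ((integrable_inv_add_expMeasure hr hd).const_mul _), integral_const_mul,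
    integral_inv_add_expMeasure hr hd, integral_const, probReal_univ, one_smul]
  ring

lemma ae_nonneg_of_map_eq_expMeasure {Ω : Type*} [MeasurableSpace Ω] {μ : Measure Ω}
    {X : Ω → ℝ} (hX : Measurable X) (hlaw : μ.map X = expMeasure r) : ∀ᵐ ω ∂μ, 0 ≤ X ω :=
  ae_of_ae_map hX.aemeasurable (hlaw ▸ ae_nonneg_expMeasure)

end Exponential

section Independence

variable {Ω α : Type*} [MeasurableSpace Ω] [MeasurableSpace α] {μ : Measure Ω}
  [IsProbabilityMeasure μ] {Z : Ω → α} {X : Ω → ℝ} {r : ℝ}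

lemma lintegral_comp_prodMk_of_indepFun {β : Type*} [MeasurableSpace β] {Y : Ω → β}
    (hZ : Measurable Z) (hY : Measurable Y) (hZY : IndepFun Z Y μ) {F : α × β → ℝ≥0∞}
    (hF : Measurable F) :
    ∫⁻ ω, F (Z ω, Y ω) ∂μ = ∫⁻ ω, ∫⁻ y, F (Z ω, y) ∂μ.map Y ∂μ := by
  rw [← lintegral_map hF (hZ.prodMk hY), hZY.map_prod_eq_prod_map_map hZ.aemeasurable
    hY.aemeasurable, lintegral_prod _ hF.aemeasurable, lintegral_map hF.lintegral_prod_right' hZ]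

lemma measure_le_of_indepFun_expMeasure (hr : 0 < r) (hZ : Measurable Z) (hX : Measurable X)
    (hlaw : μ.map X = expMeasure r) (hZX : IndepFun Z X μ) {g : α → ℝ} (hg : Measurable g)
    (hg0 : ∀ᵐ ω ∂μ, 0 ≤ g (Z ω)) :
    μ {ω | g (Z ω) ≤ X ω} = ∫⁻ ω, ENNReal.ofReal (exp (-(r * g (Z ω)))) ∂μ := by
  have hS : MeasurableSet {p : α × ℝ | g p.1 ≤ p.2} :=
    measurableSet_le (by fun_prop) (by fun_prop)
  calc μ {ω | g (Z ω) ≤ X ω} = μ.map (fun ω => (Z ω, X ω)) {p | g p.1 ≤ p.2} :=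
        (Measure.map_apply (hZ.prodMk hX) hS).symm
    _ = ∫⁻ ω, expMeasure r (Ici (g (Z ω))) ∂μ := by
        rw [hZX.map_prod_eq_prod_map_map hZ.aemeasurable hX.aemeasurable, Measure.prod_apply hS,
          lintegral_map (measurable_measure_prodMk_left hS) hZ, hlaw]
        rfl
    _ = ∫⁻ ω, ENNReal.ofReal (exp (-(r * g (Z ω)))) ∂μ := by
        refine lintegral_congr_ae ?_
        filter_upwards [hg0] with ω hω
        exact expMeasure_Ici hr hω

lemma lintegral_exp_neg_mul_of_indepFun (hr : 0 < r) (hZ : Measurable Z) (hX : Measurable X)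
    (hlaw : μ.map X = expMeasure r) (hZX : IndepFun Z X μ) {s : α → ℝ} (hs : Measurable s)
    (hrs : ∀ᵐ ω ∂μ, 0 < r + s (Z ω)) :
    ∫⁻ ω, ENNReal.ofReal (exp (-(s (Z ω) * X ω))) ∂μ
      = ∫⁻ ω, ENNReal.ofReal (r / (r + s (Z ω))) ∂μ := by
  rw [lintegral_comp_prodMk_of_indepFun (F := fun p => ENNReal.ofReal (exp (-(s p.1 * p.2))))
    hZ hX hZX (by fun_prop), hlaw]
  refine lintegral_congr_ae ?_
  filter_upwards [hrs] with ω hω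
  exact lintegral_exp_neg_mul_expMeasure hr hω

lemma measure_add_mul_le_of_indepFun_expMeasure {Y : Ω → ℝ} {rX rY k : ℝ} (hrX : 0 < rX)
    (hrY : 0 < rY) (hk : 0 ≤ k) (hZ : Measurable Z) (hY : Measurable Y) (hX : Measurable X)
    (hlawY : μ.map Y = expMeasure rY) (hlawX : μ.map X = expMeasure rX)
    (hZY_X : IndepFun (fun ω => (Z ω, Y ω)) X μ) (hZ_Y : IndepFun Z Y μ) {u : α → ℝ}
    (hu : Measurable u) (hu0 : ∀ᵐ ω ∂μ, 0 ≤ u (Z ω)) :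
    μ {ω | k + Y ω * u (Z ω) ≤ X ω}
      = ENNReal.ofReal (exp (-(rX * k)))
        * ∫⁻ ω, ENNReal.ofReal (rY / (rY + rX * u (Z ω))) ∂μ := by
  have hY0 := ae_nonneg_of_map_eq_expMeasure hY hlawY
  calc μ {ω | k + Y ω * u (Z ω) ≤ X ω}
      = ∫⁻ ω, ENNReal.ofReal (exp (-(rX * (k + Y ω * u (Z ω))))) ∂μ := by
        refine measure_le_of_indepFun_expMeasure (g := fun p => k + p.2 * u p.1) hrX
          (hZ.prodMk hY) hX hlawX hZY_X (by fun_prop) ?_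
        filter_upwards [hY0, hu0] with ω hYω huω
        positivity
    _ = ∫⁻ ω, ENNReal.ofReal (exp (-(rX * k)))
          * ENNReal.ofReal (exp (-(rX * u (Z ω) * Y ω))) ∂μ := by
        congr with ω
        rw [← ENNReal.ofReal_mul (exp_pos _).le, ← exp_add]
        ring_nf
    _ = _ := by
        rw [lintegral_const_mul _ (by fun_prop), lintegral_exp_neg_mul_of_indepFun
          (s := fun a => rX * u a) hrY hZ hY hlawY hZ_Y (by fun_prop)]
        filter_upwards [hu0] with ω hω
        positivity

end Independence

lemma snr_ratio_lt_iff {ρ x y v T : ℝ} (hρ : 0 < ρ) (hy : 0 ≤ y) :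
    (1 + ρ * x + ρ * y * v) / (1 + ρ * y) < T ↔ x < (T - 1) / ρ + y * (T - v) := by
  rw [div_lt_iff₀ (by positivity), ← sub_pos, ← sub_pos (b := x)]
  have : (T - 1) / ρ + y * (T - v) - x = (T * (1 + ρ * y) - (1 + ρ * x + ρ * y * v)) / ρ := by
    field_simp
    ring
  rw [this, div_pos_iff_of_pos_right hρ]

lemma measure_snr_ratio_lt {Ω : Type*} [MeasurableSpace Ω] {μ : Measure Ω}
    [IsProbabilityMeasure μ] {X Y V : Ω → ℝ} {ρ T : ℝ} (hρ : 0 < ρ) (hX : Measurable X)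
    (hY : Measurable Y) (hV : Measurable V) (hY0 : ∀ᵐ ω ∂μ, 0 ≤ Y ω) :
    μ {ω | (1 + ρ * X ω + ρ * Y ω * V ω) / (1 + ρ * Y ω) < T}
      = 1 - μ {ω | (T - 1) / ρ + Y ω * (T - V ω) ≤ X ω} := by
  rw [← prob_compl_eq_one_sub (measurableSet_le (by fun_prop) hX)]
  refine measure_congr ?_
  filter_upwards [hY0] with ω hω
  simp only [compl_ofPred, not_le]
  exact propext (snr_ratio_lt_iff hρ hω)

lemma inv_div_inv_add_eq {γ₁ γ₂ T c w : ℝ} (h₁ : 0 < γ₁) (h₂ : 0 < γ₂) (hT : 1 ≤ T)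
    (hc : 0 < c) (hw : 0 ≤ w) :
    (1 / γ₁) / (1 / γ₁ + 1 / γ₂ * (T - w / (w + c)))
      = γ₂ / ((T - 1) * γ₁ + γ₂)
        * ((w + c) / (w + c * ((T * γ₁ + γ₂) / ((T - 1) * γ₁ + γ₂)))) := by
  set b := (T - 1) * γ₁ + γ₂
  set a := T * γ₁ + γ₂
  have hb : 0 < b := by nlinarith
  have ha : 0 < a := by nlinarith
  have hwc : 0 < w + c := by linarith
  have hs :
      1 / γ₁ + 1 / γ₂ * (T - w / (w + c)) = (b * w + a * c) / (γ₁ * γ₂ * (w + c)) := by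
    field_simp
    ring
  have hd : w + c * (a / b) = (b * w + a * c) / b := by
    field_simp
  have hbwac : 0 < b * w + a * c := by positivity
  rw [hs, hd]
  field_simp

lemma lintegral_inv_div_inv_add_expMeasure {r γ₁ γ₂ T c : ℝ} (hr : 0 < r) (h₁ : 0 < γ₁)
    (h₂ : 0 < γ₂) (hT : 1 ≤ T) (hc : 0 < c) :
    ∫⁻ w, ENNReal.ofReal ((1 / γ₁) / (1 / γ₁ + 1 / γ₂ * (T - w / (w + c)))) ∂expMeasure r
      = ENNReal.ofReal (γ₂ / ((T - 1) * γ₁ + γ₂)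
          * ∫ w, (w + c) / (w + c * ((T * γ₁ + γ₂) / ((T - 1) * γ₁ + γ₂))) ∂expMeasure r) := by
  have hd : 0 < c * ((T * γ₁ + γ₂) / ((T - 1) * γ₁ + γ₂)) := by
    have : 0 < (T - 1) * γ₁ + γ₂ := by nlinarith
    have : 0 < T * γ₁ + γ₂ := by nlinarith
    positivity
  rw [← integral_const_mul, ofReal_integral_eq_lintegral_ofReal
    ((integrable_add_div_add_expMeasure hr c hd).const_mul _)
    (by filter_upwards [ae_nonneg_expMeasure] with w hw; positivity)]
  refine lintegral_congr_ae ?_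
  filter_upwards [ae_nonneg_expMeasure] with w hw
  rw [inv_div_inv_add_eq h₁ h₂ hT hc hw]

/-- Proposition 1: the exact secrecy outage probability of AF relaying with a
single-antenna relay. With `V = W/(W + γAR + 1/ρ)`,
`P((1 + ρX + ρYV)/(1 + ρY) < 2^{2R})
  = 1 - γAB/((2^{2R}-1)γAR + γAB) e^{-(2^{2R}-1)/(ργAB)} [μ₁(β₂-1)e^{μ₁β₂}Ei(-μ₁β₂)+1]`. -/
theorem sop_AF_single_antenna {Ω : Type*} [MeasurableSpace Ω] (μ : Measure Ω)
    [IsProbabilityMeasure μ] (γAB γAR γRB ρ R : ℝ)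
    (hAB : 0 < γAB) (hAR : 0 < γAR) (hRB : 0 < γRB) (hρ : 0 < ρ) (hR : 0 ≤ R)
    (X Y W : Ω → ℝ) (hXm : Measurable X) (hYm : Measurable Y) (hWm : Measurable W)
    (hX : Measure.map X μ = expMeasure (1 / γAB))
    (hY : Measure.map Y μ = expMeasure (1 / γAR))
    (hW : Measure.map W μ = expMeasure (1 / γRB))
    (hindep : iIndepFun ![X, Y, W] μ) :
    μ {ω | (1 + ρ * X ω + ρ * Y ω * (W ω / (W ω + γAR + 1 / ρ))) / (1 + ρ * Y ω)
            < (2 : ℝ) ^ (2 * R)}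
      = ENNReal.ofReal
          (1 - γAB / (((2 : ℝ) ^ (2 * R) - 1) * γAR + γAB)
              * Real.exp (-((2 : ℝ) ^ (2 * R) - 1) / (ρ * γAB))
              * ((γAR + 1 / ρ) / γRB
                    * (((2 : ℝ) ^ (2 * R) * γAR + γAB)
                        / (((2 : ℝ) ^ (2 * R) - 1) * γAR + γAB) - 1)
                    * Real.exp ((γAR + 1 / ρ) / γRB
                        * (((2 : ℝ) ^ (2 * R) * γAR + γAB)
                            / (((2 : ℝ) ^ (2 * R) - 1) * γAR + γAB)))
                    * Ei (-((γAR + 1 / ρ) / γRB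
                        * (((2 : ℝ) ^ (2 * R) * γAR + γAB)
                            / (((2 : ℝ) ^ (2 * R) - 1) * γAR + γAB)))) + 1)) := by
  set T := (2 : ℝ) ^ (2 * R)
  have hT : 1 ≤ T := one_le_rpow one_le_two (by positivity)
  set c := γAR + 1 / ρ
  have hc : 0 < c := by positivity
  set β := (T * γAR + γAB) / ((T - 1) * γAR + γAB)
  simp only [add_assoc _ γAR]
  have hu0 : ∀ᵐ ω ∂μ, 0 ≤ T - W ω / (W ω + c) := by
    filter_upwards [ae_nonneg_of_map_eq_expMeasure hWm hW] with ω hω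
    linarith [div_le_one_of_le₀ (by linarith : W ω ≤ W ω + c) (by positivity)]
  have hWY_X : IndepFun (fun ω => (W ω, Y ω)) X μ := by
    simpa using hindep.indepFun_prodMk (fun i => by fin_cases i <;> assumption) 2 1 0
      (by decide) (by decide)
  have hW_Y : IndepFun W Y μ := by simpa using hindep.indepFun (show (2 : Fin 3) ≠ 1 by decide)
  have hI : 0 ≤ ∫ w, (w + c) / (w + c * β) ∂expMeasure (1 / γRB) :=
    integral_nonneg_of_ae (by filter_upwards [ae_nonneg_expMeasure] with w hw; positivity)
  rw [measure_snr_ratio_lt hρ hXm hYm (by fun_prop) (ae_nonneg_of_map_eq_expMeasure hYm hY),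
    measure_add_mul_le_of_indepFun_expMeasure (u := fun w => T - w / (w + c)) (by positivity)
      (by positivity) (by positivity) hWm hYm hXm hY hX hWY_X hW_Y (by fun_prop) hu0,
    ← lintegral_map
      (f := fun w => ENNReal.ofReal (1 / γAR / (1 / γAR + 1 / γAB * (T - w / (w + c)))))
      (by fun_prop) hWm, hW, lintegral_inv_div_inv_add_expMeasure (by positivity) hAR hAB hT hc,
    ← ENNReal.ofReal_mul (exp_pos _).le, ← ENNReal.ofReal_one,
    ← ENNReal.ofReal_sub _ (by positivity),
    integral_add_div_add_expMeasure (by positivity) _ (by positivity)]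
  congr 1
  rw [show c / γRB * β = 1 / γRB * (c * β) by ring,
    show -(1 / γAB * ((T - 1) / ρ)) = -(T - 1) / (ρ * γAB) by ring]
  ring
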